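/- arXiv:2501.06979 — 2 statements merged into one kernel-verified Lean document; each statement's English description precedes it below -/
import Mathlib

section
/- For all natural numbers n and m, the Born-Jordan quantization of q^n p^m, defined as (1/(n+1)) * ∑_{k=0}^{n} Q^k P^m Q^{n-k}, equals the integral over τ from 0 to 1 of the τ-quantization S_τ(q^n p^m) = ∑_{j=0}^{m} C(m,j) (1-τ)^j τ^{m-j} P^{m-j} Q^n P^j, where Q and P are operators satisfying [Q,P] = iℏ. -/
open scoped BigOperators
open MeasureTheory intervalIntegral

private lemma comm_pow_sum {A : Type*} [Ring A] (X Y : A) (n : ℕ) :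
    X ^ (n + 1) * Y - Y * X ^ (n + 1) =
      ∑ k ∈ Finset.range (n + 1), X ^ k * (X * Y - Y * X) * X ^ (n - k) := by
  induction n with
  | zero => simp
  | succ n ih =>
    rw [Finset.sum_range_succ']
    have h1 : ∀ k ∈ Finset.range (n + 1),
        X ^ (k + 1) * (X * Y - Y * X) * X ^ (n + 1 - (k + 1)) =
        X * (X ^ k * (X * Y - Y * X) * X ^ (n - k)) := by
      intro k _
      rw [Nat.succ_sub_succ, pow_succ']
      noncomm_ring
    rw [Finset.sum_congr rfl h1, ← Finset.mul_sum, ← ih]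
    simp only [pow_zero, one_mul, Nat.sub_zero]
    rw [pow_succ']
    noncomm_ring

private lemma prod_shift_factorial (a b : ℕ) :
    (∏ i ∈ Finset.range b, (a + 1 + i)) * Nat.factorial a = Nat.factorial (a + b) := by
  induction b with
  | zero => simp
  | succ b ih =>
    rw [Finset.prod_range_succ, mul_right_comm, ih, ← Nat.add_assoc,
      Nat.factorial_succ (a + b)]
    ring

private lemma beta_eval (j k : ℕ) :
    ((∫ τ in (0:ℝ)..1, (1 - τ) ^ j * τ ^ k : ℝ) : ℂ) =
      (Nat.factorial j : ℂ) / ∏ i ∈ Finset.range (j + 1), ((k : ℂ) + 1 + i) := by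
  have h1 : ((∫ τ in (0:ℝ)..1, (1 - τ) ^ j * τ ^ k : ℝ) : ℂ)
      = Complex.betaIntegral ((k : ℂ) + 1) ((j : ℂ) + 1) := by
    rw [Complex.betaIntegral, ← intervalIntegral.integral_ofReal]
    refine intervalIntegral.integral_congr fun x hx => ?_
    push_cast
    rw [add_sub_cancel_right, add_sub_cancel_right, Complex.cpow_natCast,
      Complex.cpow_natCast]
    ring
  rw [h1]
  have hu : 0 < Complex.re ((k : ℂ) + 1) := by
    simp only [Complex.add_re, Complex.natCast_re, Complex.one_re]
    positivity
  rw [Complex.betaIntegral_eval_nat_add_one_right hu j]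

private lemma coeff_eval (m j : ℕ) (hj : j ≤ m) :
    ((m.choose j : ℂ)) * ((∫ τ in (0:ℝ)..1, (1 - τ) ^ j * τ ^ (m - j) : ℝ) : ℂ)
      = 1 / ((m : ℂ) + 1) := by
  rw [beta_eval]
  set N : ℕ := ∏ i ∈ Finset.range (j + 1), (m - j + 1 + i) with hNdef
  have hcast : (∏ i ∈ Finset.range (j + 1), (((m - j : ℕ) : ℂ) + 1 + i)) = (N : ℂ) := by
    rw [hNdef]
    push_cast
    rfl
  rw [hcast]
  have hN : N * Nat.factorial (m - j) = Nat.factorial (m + 1) := by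
    rw [hNdef, prod_shift_factorial]
    congr 1
    omega
  have hkey : m.choose j * Nat.factorial j * (m + 1) = N := by
    have hc := Nat.choose_mul_factorial_mul_factorial hj
    refine Nat.eq_of_mul_eq_mul_right (Nat.factorial_pos (m - j)) ?_
    calc m.choose j * Nat.factorial j * (m + 1) * Nat.factorial (m - j)
        = (m + 1) * (m.choose j * Nat.factorial j * Nat.factorial (m - j)) := by ring
      _ = (m + 1) * Nat.factorial m := by rw [hc]
      _ = Nat.factorial (m + 1) := (Nat.factorial_succ m).symm
      _ = N * Nat.factorial (m - j) := hN.symm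
  have hN0 : (N : ℂ) ≠ 0 := by
    have h0 : N ≠ 0 := by
      intro h
      rw [h, zero_mul] at hN
      exact (Nat.factorial_pos (m + 1)).ne' hN.symm
    exact_mod_cast h0
  have hm0 : ((m : ℂ) + 1) ≠ 0 := by exact_mod_cast Nat.succ_ne_zero m
  field_simp
  exact_mod_cast hkey

private lemma comm_pow_right {A : Type*} [Ring A] [Algebra ℂ A]
    (Q P : A) (c : ℂ) (hCCR : Q * P - P * Q = c • (1 : A)) (m : ℕ) :
    Q * P ^ (m + 1) - P ^ (m + 1) * Q = (((m : ℂ) + 1) * c) • P ^ m := by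
  have h2 : P * Q - Q * P = (-c) • (1 : A) := by
    rw [← neg_sub (Q * P) (P * Q), hCCR, neg_smul]
  have h := comm_pow_sum P Q m
  rw [h2] at h
  have h3 : ∀ k ∈ Finset.range (m + 1),
      P ^ k * ((-c) • (1 : A)) * P ^ (m - k) = (-c) • P ^ m := by
    intro k hk
    rw [mul_smul_comm, mul_one, smul_mul_assoc, ← pow_add]
    congr 2
    have := Finset.mem_range.mp hk
    omega
  rw [Finset.sum_congr rfl h3, Finset.sum_const, Finset.card_range] at h
  calc Q * P ^ (m + 1) - P ^ (m + 1) * Q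
      = -(P ^ (m + 1) * Q - Q * P ^ (m + 1)) := (neg_sub _ _).symm
    _ = -((m + 1) • ((-c) • P ^ m)) := by rw [h]
    _ = (((m : ℂ) + 1) * c) • P ^ m := by
        rw [← Nat.cast_smul_eq_nsmul ℂ, smul_smul, ← neg_smul]
        congr 1
        push_cast
        ring

/-- Born–Jordan quantization of `q^n p^m` equals the τ-average (coefficient-wise
integral over τ ∈ [0,1]) of the τ-quantizations `S_τ(q^n p^m)`. -/
theorem born_jordan_eq_integral_tau_quantization
    {A : Type*} [Ring A] [Algebra ℂ A]
    (Q P : A) (c : ℂ) (hc : c ≠ 0)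
    (hCCR : Q * P - P * Q = c • (1 : A))
    (n m : ℕ) :
    ((1 : ℂ) / (n + 1)) • (∑ k ∈ Finset.range (n + 1), Q ^ k * P ^ m * Q ^ (n - k)) =
      ∑ j ∈ Finset.range (m + 1),
        (((m.choose j : ℂ)) *
          ((∫ τ in (0:ℝ)..1, (1 - τ) ^ j * τ ^ (m - j) : ℝ) : ℂ)) •
          (P ^ (m - j) * Q ^ n * P ^ j) := by
  set L : A := ∑ k ∈ Finset.range (n + 1), Q ^ k * P ^ m * Q ^ (n - k) with hL
  set R : A := ∑ j ∈ Finset.range (m + 1), P ^ j * Q ^ n * P ^ (m - j) with hR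
  -- RHS equals (1/(m+1)) • R
  have hrhs : (∑ j ∈ Finset.range (m + 1),
      (((m.choose j : ℂ)) *
        ((∫ τ in (0:ℝ)..1, (1 - τ) ^ j * τ ^ (m - j) : ℝ) : ℂ)) •
        (P ^ (m - j) * Q ^ n * P ^ j)) = ((1 : ℂ) / ((m : ℂ) + 1)) • R := by
    have h1 : ∀ j ∈ Finset.range (m + 1),
        (((m.choose j : ℂ)) *
          ((∫ τ in (0:ℝ)..1, (1 - τ) ^ j * τ ^ (m - j) : ℝ) : ℂ)) •
          (P ^ (m - j) * Q ^ n * P ^ j)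
        = ((1 : ℂ) / ((m : ℂ) + 1)) • (P ^ (m - j) * Q ^ n * P ^ j) := by
      intro j hj
      rw [coeff_eval m j (Nat.lt_succ_iff.mp (Finset.mem_range.mp hj))]
    rw [Finset.sum_congr rfl h1, ← Finset.smul_sum]
    congr 1
    rw [hR, ← Finset.sum_range_reflect]
    refine Finset.sum_congr rfl fun j hj => ?_
    have hj' : j ≤ m := Nat.lt_succ_iff.mp (Finset.mem_range.mp hj)
    have e1 : m + 1 - 1 - j = m - j := by omega
    have e2 : m - (m - j) = j := by omega
    rw [e1, e2]
  rw [hrhs]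
  -- The key commutator computation
  have hQP := comm_pow_right Q P c hCCR
  have hPQ := comm_pow_right P Q (-c)
    (by rw [← neg_sub (Q * P) (P * Q), hCCR, neg_smul])
  have hA : Q ^ (n + 1) * P ^ (m + 1) - P ^ (m + 1) * Q ^ (n + 1)
      = (((m : ℂ) + 1) * c) • L := by
    rw [comm_pow_sum Q (P ^ (m + 1)) n, hL, Finset.smul_sum]
    refine Finset.sum_congr rfl fun k hk => ?_
    rw [hQP m, mul_smul_comm, smul_mul_assoc]
  have hB : P ^ (m + 1) * Q ^ (n + 1) - Q ^ (n + 1) * P ^ (m + 1)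
      = (((n : ℂ) + 1) * (-c)) • R := by
    rw [comm_pow_sum P (Q ^ (n + 1)) m, hR, Finset.smul_sum]
    refine Finset.sum_congr rfl fun j hj => ?_
    rw [hPQ n, mul_smul_comm, smul_mul_assoc]
  have key : (((m : ℂ) + 1) * c) • L = (((n : ℂ) + 1) * c) • R := by
    calc (((m : ℂ) + 1) * c) • L
        = Q ^ (n + 1) * P ^ (m + 1) - P ^ (m + 1) * Q ^ (n + 1) := hA.symm
      _ = -(P ^ (m + 1) * Q ^ (n + 1) - Q ^ (n + 1) * P ^ (m + 1)) := (neg_sub _ _).symm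
      _ = -((((n : ℂ) + 1) * (-c)) • R) := by rw [hB]
      _ = (((n : ℂ) + 1) * c) • R := by rw [← neg_smul]; congr 1; ring
  -- cancel c
  have key2 : ((m : ℂ) + 1) • L = ((n : ℂ) + 1) • R := by
    have h := congrArg (fun x => c⁻¹ • x) key
    simp only [mul_comm _ c, mul_smul, inv_smul_smul₀ hc] at h
    exact h
  have hm0 : ((m : ℂ) + 1) ≠ 0 := by exact_mod_cast Nat.succ_ne_zero m
  have hn0 : ((n : ℂ) + 1) ≠ 0 := by exact_mod_cast Nat.succ_ne_zero n
  have h := congrArg (fun x => (((n : ℂ) + 1)⁻¹ * ((m : ℂ) + 1)⁻¹) • x) key2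
  simp only [smul_smul] at h
  rw [show ((n : ℂ) + 1)⁻¹ * ((m : ℂ) + 1)⁻¹ * ((m : ℂ) + 1) = 1 / ((n : ℂ) + 1) by
      field_simp,
    show ((n : ℂ) + 1)⁻¹ * ((m : ℂ) + 1)⁻¹ * ((n : ℂ) + 1) = 1 / ((m : ℂ) + 1) by
      field_simp] at h
  exact h
end

section
/- If the secular momentum expansion p̃_ε(τ) = π_{-1}(τ)/ε + π₀(τ) + π₁(τ)ε + ... holds and q̃_ε satisfies dq̃_ε/dτ = ε·u(q̃_ε, p̃_ε) with q̃_ε bounded uniformly in ε, and u(q,p) = Σ_{n≥0} u_n(q)p^n with some u_N not identically zero for N ≥ 2 and π_{-1} ≠ 0, then dq̃_ε/dτ diverges as ε → 0⁺ (order ε^{1-N}); hence boundedness of the expansion forces u_n ≡ 0 for n ≥ 2, i.e., H is at most quadratic in p. -/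
open Filter Topology

/-- If `u(q,p) = u_N(q)·p^N` with `N ≥ 2`, `u_N(q₀) ≠ 0`, the momentum is
secular `p̃_ε = c/ε + O(1)` with `c ≠ 0`, and `q̃_ε → q₀` as `ε → 0⁺`, then
`|ε·u(q̃_ε, p̃_ε)| = |ε·u_N(q̃_ε)·(p̃_ε)^N| → ∞` as `ε → 0⁺`: the velocity
diverges, so Hamiltonians of higher than quadratic order in `p` are
incompatible with the secular expansion. -/
theorem secular_expansion_forces_quadratic
    (N : ℕ) (hN : 2 ≤ N)
    (uN : ℝ → ℝ) (huN : Continuous uN)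
    (q₀ c : ℝ) (hq₀ : uN q₀ ≠ 0) (hc : c ≠ 0)
    (qε pε : ℝ → ℝ)
    (hq : Tendsto qε (nhdsWithin 0 (Set.Ioi 0)) (nhds q₀))
    (hp : ∃ M : ℝ, ∀ᶠ ε in nhdsWithin 0 (Set.Ioi 0), |pε ε - c / ε| ≤ M) :
    Tendsto (fun ε : ℝ => |ε * (uN (qε ε) * (pε ε) ^ N)|)
      (nhdsWithin 0 (Set.Ioi 0)) atTop := by
  obtain ⟨n, rfl⟩ : ∃ n, N = n + 2 := ⟨N - 2, by omega⟩
  obtain ⟨M, hM⟩ := hp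
  set k : ℝ := |uN q₀| / 2 * (|c| / 2) ^ (n + 2) with hkdef
  have hq₀' : 0 < |uN q₀| := abs_pos.2 hq₀
  have hc' : 0 < |c| := abs_pos.2 hc
  have hk0 : 0 < k := by positivity
  -- ε > 0 eventually
  have hε0 : ∀ᶠ ε in nhdsWithin (0:ℝ) (Set.Ioi 0), 0 < ε := self_mem_nhdsWithin
  -- ε ≤ 1 eventually
  have hε1 : ∀ᶠ ε in nhdsWithin (0:ℝ) (Set.Ioi 0), ε ≤ 1 := by
    filter_upwards [Ioo_mem_nhdsGT_of_mem (show (0:ℝ) ∈ Set.Ico (0:ℝ) 1 by norm_num)]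
      with ε hε using le_of_lt hε.2
  -- ε * pε ε → c
  have htp : Tendsto (fun ε => ε * pε ε) (nhdsWithin 0 (Set.Ioi 0)) (nhds c) := by
    rw [← tendsto_sub_nhds_zero_iff]
    apply squeeze_zero_norm' (a := fun ε => ε * M)
    · filter_upwards [hM, hε0] with ε hMε hεpos
      have : ε * pε ε - c = ε * (pε ε - c / ε) := by
        field_simp
      rw [this, Real.norm_eq_abs, abs_mul, abs_of_pos hεpos]
      exact mul_le_mul_of_nonneg_left hMε hεpos.le
    · have : Tendsto (fun ε : ℝ => ε * M) (nhdsWithin 0 (Set.Ioi 0)) (nhds (0 * M)) :=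
        (tendsto_id.mono_left nhdsWithin_le_nhds).mul_const M
      simpa using this
  have hpb : ∀ᶠ ε in nhdsWithin (0:ℝ) (Set.Ioi 0), |c| / 2 ≤ |ε * pε ε| := by
    filter_upwards [htp.abs.eventually (lt_mem_nhds (half_lt_self hc'))] with ε hε
      using hε.le
  have hub : ∀ᶠ ε in nhdsWithin (0:ℝ) (Set.Ioi 0), |uN q₀| / 2 ≤ |uN (qε ε)| := by
    have : Tendsto (fun ε => |uN (qε ε)|) (nhdsWithin 0 (Set.Ioi 0)) (nhds |uN q₀|) :=
      ((huN.tendsto q₀).comp hq).abs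
    filter_upwards [this.eventually (lt_mem_nhds (half_lt_self hq₀'))] with ε hε using hε.le
  refine tendsto_atTop_mono' _ ?_ (tendsto_inv_nhdsGT_zero.const_mul_atTop hk0)
  filter_upwards [hε0, hε1, hpb, hub] with ε h0 h1 hpε huε
  have hεN : (0:ℝ) < ε ^ (n + 1) := pow_pos h0 _
  refine le_of_mul_le_mul_right ?_ hεN
  have hL : k * ε⁻¹ * ε ^ (n + 1) = k * ε ^ n := by
    field_simp
    ring
  have hR : |ε * (uN (qε ε) * pε ε ^ (n + 2))| * ε ^ (n + 1)
      = |uN (qε ε)| * |ε * pε ε| ^ (n + 2) := by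
    rw [abs_mul, abs_mul, abs_pow, abs_mul, abs_of_pos h0]
    ring
  rw [hL, hR]
  have h2 : k * ε ^ n ≤ k := by
    have : ε ^ n ≤ 1 := pow_le_one₀ h0.le h1
    nlinarith
  refine h2.trans ?_
  rw [hkdef]
  exact mul_le_mul huε (pow_le_pow_left₀ (by positivity) hpε _) (by positivity)
    (abs_nonneg _)
end
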